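/- For every x ∈ X, the function φ_x = φ(x,·) is a critical sub-solution; for every y ≠ x one has φ_x(y) = T⁻φ_x(y) + α[0]; consequently φ_x is lower semi-continuous on X and continuous on X ∖ {x}. -/

import Mathlib

open Metric Set Filter Topology

/-- `X` is a `B`-length space at scale `K`. -/
def IsBLengthSpaceAtScale (X : Type*) [MetricSpace X] (B K : ℝ) : Prop :=
  ∀ x y : X, ∃ (n : ℕ) (p : ℕ → X), p 0 = x ∧ p n = y ∧
    (∀ i < n, dist (p i) (p (i + 1)) ≤ K) ∧
    ∑ i ∈ Finset.range n, dist (p i) (p (i + 1)) ≤ B * dist x y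

/-- Uniform superlinearity of the cost `c`. -/
def UniformlySuperlinear {X : Type*} [MetricSpace X] (c : X → X → ℝ) : Prop :=
  ∀ k : ℝ, 0 ≤ k → ∃ C : ℝ, ∀ x y : X, k * dist x y - C ≤ c x y

/-- Uniform boundedness of the cost `c`. -/
def UniformlyBounded {X : Type*} [MetricSpace X] (c : X → X → ℝ) : Prop :=
  ∀ R : ℝ, ∃ A : ℝ, ∀ x y : X, dist x y ≤ R → c x y ≤ A

/-- `u` is `α`-dominated: `u y - u x ≤ c x y + α` for all `x y`. -/
def Dominated {X : Type*} (c : X → X → ℝ) (α : ℝ) (u : X → ℝ) : Prop :=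
  ∀ x y : X, u y - u x ≤ c x y + α

/-- Negative Lax-Oleinik semigroup. -/
noncomputable def Tm {X : Type*} (c : X → X → ℝ) (u : X → ℝ) (x : X) : ℝ :=
  ⨅ y, (u y + c y x)

/-- Positive Lax-Oleinik semigroup. -/
noncomputable def Tp {X : Type*} (c : X → X → ℝ) (u : X → ℝ) (x : X) : ℝ :=
  ⨆ y, (u y - c x y)

/-- The critical constant `α[0]`: the smallest `α` for which `α`-dominated functions exist. -/
noncomputable def critValue {X : Type*} (c : X → X → ℝ) : ℝ :=
  sInf {α : ℝ | ∃ u : X → ℝ, Dominated c α u}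

/-- The Mañé potential `φ(x,y) = sup_u (u y - u x)`, sup over critical sub-solutions. -/
noncomputable def mane {X : Type*} (c : X → X → ℝ) (x y : X) : ℝ :=
  sSup {r : ℝ | ∃ u : X → ℝ, Dominated c (critValue c) u ∧ r = u y - u x}

/-- A bi-infinite sequence is `(u,c,α)`-calibrated if all its finite subchains of
consecutive terms are calibrated. -/
def IsCalibrated {X : Type*} (c : X → X → ℝ) (α : ℝ) (u : X → ℝ) (x : ℤ → X) : Prop :=
  ∀ (m : ℤ) (k : ℕ), u (x (m + k)) =
    u (x m) + (∑ i ∈ Finset.range k, c (x (m + i)) (x (m + i + 1))) + k * α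

/-- The projected Aubry set of a critical sub-solution `u`. -/
def projAubry {X : Type*} (c : X → X → ℝ) (u : X → ℝ) : Set X :=
  {p : X | ∃ x : ℤ → X, IsCalibrated c (critValue c) u x ∧ x 0 = p}

/-- The set `Â_u` of pairs of consecutive terms of calibrated bi-infinite sequences. -/
def aubryPairs {X : Type*} (c : X → X → ℝ) (u : X → ℝ) : Set (X × X) :=
  {q : X × X | ∃ (x : ℤ → X) (n : ℤ),
    IsCalibrated c (critValue c) u x ∧ x n = q.1 ∧ x (n + 1) = q.2}

/-- The projected Aubry set `A = ∩_u A_u`, intersection over all critical sub-solutions. -/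
def projAubrySet {X : Type*} (c : X → X → ℝ) : Set X :=
  {p : X | ∀ u : X → ℝ, Dominated c (critValue c) u → p ∈ projAubry c u}

/-- The Aubry pair set `Â = ∩_u Â_u`, intersection over all critical sub-solutions. -/
def aubryPairsSet {X : Type*} (c : X → X → ℝ) : Set (X × X) :=
  {q : X × X | ∀ u : X → ℝ, Dominated c (critValue c) u → q ∈ aubryPairs c u}

/-- `c_n(x,y)`: infimum of total cost over chains of length `n` from `x` to `y`. -/
noncomputable def cChain {X : Type*} (c : X → X → ℝ) (n : ℕ) (x y : X) : ℝ :=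
  sInf {r : ℝ | ∃ p : ℕ → X, p 0 = x ∧ p n = y ∧
    r = ∑ i ∈ Finset.range n, c (p i) (p (i + 1))}

/-- `φ_n(x,y) = inf_{k ≥ n} (c_k(x,y) + k·α)`. -/
noncomputable def phiN {X : Type*} (c : X → X → ℝ) (α : ℝ) (n : ℕ) (x y : X) : ℝ :=
  sInf {r : ℝ | ∃ k : ℕ, n ≤ k ∧ r = cChain c k x y + k * α}

/-- The Peierls barrier, with values in the extended reals. -/
noncomputable def peierls {X : Type*} (c : X → X → ℝ) (α : ℝ) (x y : X) : EReal :=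
  Filter.liminf (fun n : ℕ => ((cChain c n x y + n * α : ℝ) : EReal)) Filter.atTop

/-- Negative Lax-Oleinik semigroup on extended-real-valued functions. -/
noncomputable def eTm {X : Type*} (c : X → X → ℝ) (u : X → EReal) (x : X) : EReal :=
  ⨅ y, (u y + (c y x : EReal))

/-- Positive Lax-Oleinik semigroup on extended-real-valued functions. -/
noncomputable def eTp {X : Type*} (c : X → X → ℝ) (u : X → EReal) (x : X) : EReal :=
  ⨆ y, (u y - (c x y : EReal))

/-!
The Mañé potential `φₓ` is the infimum of the critical costs `∑ c(pᵢ, pᵢ₊₁) + n α[0]` of chains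
starting at `x`. Telescoping bounds every critical sub-solution by it, and it is one itself because
closed chains have nonnegative critical cost (test them against `α`-dominated functions,
`α > α[0]`). Splitting off the last step of a chain gives `φₓ = T⁻φₓ + α[0]` off `x`.

Chaining along the length structure makes `φₓ` coarsely Lipschitz, so by superlinearity of `c` the
infimum defining `T⁻φₓ` at points near `y` is approached in a fixed compact ball, on which `c` is
uniformly continuous; hence `T⁻φₓ` is continuous. Finally `φₓ` agrees with `T⁻φₓ + α[0]` off `x`
and lies below it at `x`, which gives lower semicontinuity.
-/

section CoarseLipschitz

variable {X : Type*}

theorem exists_anchor_of_chain [PseudoMetricSpace X] {g : X → ℝ} {E K : ℝ} (hK : 0 < K)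
    (hg : ∀ a b, dist a b ≤ K → g b - g a ≤ E) (p : ℕ → X) (n : ℕ)
    (hp : ∀ i < n, dist (p i) (p (i + 1)) ≤ K) :
    ∃ j ≤ n, ∑ i ∈ Finset.Ico j n, dist (p i) (p (i + 1)) ≤ K ∧
      g (p j) - g (p 0) ≤ 2 * E / K * ∑ i ∈ Finset.range j, dist (p i) (p (i + 1)) := by
  induction n with
  | zero => exact ⟨0, le_rfl, by simp [hK.le], by simp⟩
  | succ n ih =>
    obtain ⟨j, hjn, htail, hj⟩ := ih fun i hi => hp i (by omega)
    have hstep := hg _ _ (hp n n.lt_succ_self)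
    by_cases hshort : ∑ i ∈ Finset.Ico j (n + 1), dist (p i) (p (i + 1)) ≤ K
    · exact ⟨j, by omega, hshort, hj⟩
    -- the tail from the anchor is longer than `K`, so the `2 E` spent since the anchor is paid for
    refine ⟨n + 1, le_rfl, by simp [hK.le], ?_⟩
    have hE : 0 ≤ E := by simpa using hg (p 0) (p 0) (by simp [hK.le])
    have hjump := hg _ _ ((dist_le_Ico_sum_dist p hjn).trans htail)
    have hpaid : 2 * E ≤ 2 * E / K * ∑ i ∈ Finset.Ico j (n + 1), dist (p i) (p (i + 1)) := by
      rw [div_mul_eq_mul_div, le_div_iff₀ hK]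
      exact mul_le_mul_of_nonneg_left (not_le.1 hshort).le (by positivity)
    rw [← Finset.sum_range_add_sum_Ico _ (by omega : j ≤ n + 1), mul_add]
    linarith

theorem sub_le_of_chain [PseudoMetricSpace X] {g : X → ℝ} {E K : ℝ} (hK : 0 < K)
    (hg : ∀ a b, dist a b ≤ K → g b - g a ≤ E) (p : ℕ → X) (n : ℕ)
    (hp : ∀ i < n, dist (p i) (p (i + 1)) ≤ K) :
    g (p n) - g (p 0) ≤ 2 * E / K * ∑ i ∈ Finset.range n, dist (p i) (p (i + 1)) + E := by
  obtain ⟨j, hjn, htail, hj⟩ := exists_anchor_of_chain hK hg p n hp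
  have hE : 0 ≤ E := by simpa using hg (p 0) (p 0) (by simp [hK.le])
  have hlast := hg _ _ ((dist_le_Ico_sum_dist p hjn).trans htail)
  have hmono : ∑ i ∈ Finset.range j, dist (p i) (p (i + 1)) ≤
      ∑ i ∈ Finset.range n, dist (p i) (p (i + 1)) :=
    Finset.sum_le_sum_of_subset_of_nonneg (Finset.range_mono hjn) fun _ _ _ => dist_nonneg
  have := mul_le_mul_of_nonneg_left hmono (by positivity : 0 ≤ 2 * E / K)
  linarith

theorem Dominated.exists_sub_le_mul_dist_add [MetricSpace X] {B K α : ℝ} {c : X → X → ℝ}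
    {u : X → ℝ}
    (hB : 0 ≤ B) (hK : 0 < K) (hlen : IsBLengthSpaceAtScale X B K) (hub : UniformlyBounded c)
    (hu : Dominated c α u) : ∃ L E : ℝ, 0 ≤ L ∧ ∀ a b, u b - u a ≤ L * dist a b + E := by
  obtain ⟨A, hA⟩ := hub K
  set E := max (A + α) 0
  have hstep : ∀ a b, dist a b ≤ K → u b - u a ≤ E := fun a b hab =>
    ((hu a b).trans (by linarith [hA a b hab])).trans (le_max_left _ _)
  refine ⟨2 * E / K * B, E, by positivity, fun a b => ?_⟩
  obtain ⟨n, p, rfl, rfl, hp, hlength⟩ := hlen a b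
  have := mul_le_mul_of_nonneg_left hlength (by positivity : 0 ≤ 2 * E / K)
  linarith [sub_le_of_chain hK hstep p n hp]

end CoarseLipschitz

section LaxOleinik

variable {X : Type*} {c : X → X → ℝ} {u : X → ℝ} {α : ℝ}

theorem Dominated.sub_le_Tm (hu : Dominated c α u) (y : X) : u y - α ≤ Tm c u y :=
  have : Nonempty X := ⟨y⟩
  le_ciInf fun z => by linarith [hu z y]

theorem Dominated.Tm_le (hu : Dominated c α u) (z y : X) : Tm c u y ≤ u z + c z y :=
  ciInf_le ⟨u y - α, by rintro _ ⟨w, rfl⟩; linarith [hu w y]⟩ z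

variable [PseudoMetricSpace X] {L E C : ℝ} {x₀ : X}

theorem dist_sub_le_add_cost (hL : 0 ≤ L) (hu : ∀ w, -(L * dist w x₀) - E ≤ u w)
    (hc : ∀ w z, (L + 1) * dist w z - C ≤ c w z) {y y' : X} (hy' : dist y' y ≤ 1) (z : X) :
    dist z y - (L * dist y x₀ + E + C + L + 1) ≤ u z + c z y' := by
  have hx₀ := mul_le_mul_of_nonneg_left (dist_triangle z y x₀) hL
  have hy := mul_le_mul_of_nonneg_left
    (by linarith [dist_triangle z y' y] : dist z y ≤ dist z y' + 1) (by linarith : 0 ≤ L + 1)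
  nlinarith [hu z, hc z y']

theorem bddBelow_range_add_cost (hL : 0 ≤ L) (hu : ∀ w, -(L * dist w x₀) - E ≤ u w)
    (hc : ∀ w z, (L + 1) * dist w z - C ≤ c w z) (y : X) :
    BddBelow (range fun z => u z + c z y) := by
  refine ⟨-(L * dist y x₀ + E + C + L + 1), ?_⟩
  rintro _ ⟨z, rfl⟩
  linarith [dist_sub_le_add_cost hL hu hc (by simp : dist y y ≤ 1) z, dist_nonneg (x := z) (y := y)]

theorem lowerSemicontinuous_Tm [ProperSpace X] (hcont : Continuous fun q : X × X => c q.1 q.2)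
    (hL : 0 ≤ L) (hu : ∀ w, -(L * dist w x₀) - E ≤ u w)
    (hc : ∀ w z, (L + 1) * dist w z - C ≤ c w z) : LowerSemicontinuous (Tm c u) := by
  intro y t ht
  set ε := (Tm c u y - t) / 2 with hε_def
  have hε : 0 < ε := by linarith
  -- near-minimisers for points near `y` lie in a fixed ball, on which `c` is uniformly continuous
  set R := Tm c u y + (L * dist y x₀ + E + C + L + 1)
  obtain ⟨δ, hδ, hunif⟩ := Metric.uniformContinuousOn_iff.1
    (((isCompact_closedBall y R).prod (isCompact_closedBall y 1)).uniformContinuousOn_of_continuous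
      hcont.continuousOn) ε hε
  filter_upwards [ball_mem_nhds y (lt_min hδ one_pos)] with y' hy'
  rw [mem_ball, lt_min_iff] at hy'
  suffices Tm c u y - ε ≤ Tm c u y' by linarith
  have : Nonempty X := ⟨y⟩
  refine le_ciInf fun z => ?_
  by_cases hz : dist z y ≤ R
  · have hTm : Tm c u y ≤ u z + c z y := ciInf_le (bddBelow_range_add_cost hL hu hc y) z
    have hclose := hunif (z, y') ⟨mem_closedBall.2 hz, mem_closedBall.2 hy'.2.le⟩ (z, y)
      ⟨mem_closedBall.2 hz, mem_closedBall_self zero_le_one⟩ (by simpa [Prod.dist_eq] using hy'.1)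
    rw [Real.dist_eq, abs_lt] at hclose
    linarith [hclose.1]
  · linarith [dist_sub_le_add_cost hL hu hc hy'.2.le z]

theorem continuous_Tm [ProperSpace X] (hcont : Continuous fun q : X × X => c q.1 q.2)
    (hL : 0 ≤ L) (hu : ∀ w, -(L * dist w x₀) - E ≤ u w)
    (hc : ∀ w z, (L + 1) * dist w z - C ≤ c w z) : Continuous (Tm c u) :=
  continuous_iff_lower_upperSemicontinuous.2 ⟨lowerSemicontinuous_Tm hcont hL hu hc,
    upperSemicontinuous_ciInf (bddBelow_range_add_cost hL hu hc) fun z =>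
      (continuous_const.add (hcont.comp (Continuous.prodMk_right z))).upperSemicontinuous⟩

end LaxOleinik

section ChainPotential

variable {X : Type*} {c : X → X → ℝ} {α r : ℝ} {u : X → ℝ} {x y : X}

/-- The empty chain (`n = 0`) is allowed, so that the potential vanishes on the diagonal. -/
def chainCosts (c : X → X → ℝ) (α : ℝ) (x y : X) : Set ℝ :=
  {r | ∃ (n : ℕ) (p : ℕ → X), p 0 = x ∧ p n = y ∧
    r = ∑ i ∈ Finset.range n, c (p i) (p (i + 1)) + n * α}

noncomputable def chainPotential (c : X → X → ℝ) (α : ℝ) (x y : X) : ℝ :=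
  sInf (chainCosts c α x y)

theorem zero_mem_chainCosts : (0 : ℝ) ∈ chainCosts c α x x :=
  ⟨0, fun _ => x, rfl, rfl, by simp⟩

theorem add_mem_chainCosts (hr : r ∈ chainCosts c α x y) (z : X) :
    r + (c y z + α) ∈ chainCosts c α x z := by
  obtain ⟨n, p, hp0, hpn, rfl⟩ := hr
  refine ⟨n + 1, Function.update p (n + 1) z, by simp [hp0], by simp, ?_⟩
  have hprefix : ∀ i ∈ Finset.range n, c (Function.update p (n + 1) z i)
      (Function.update p (n + 1) z (i + 1)) = c (p i) (p (i + 1)) := fun i hi => by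
    rw [Finset.mem_range] at hi
    rw [Function.update_of_ne (by omega), Function.update_of_ne (by omega)]
  rw [Finset.sum_range_succ, Finset.sum_congr rfl hprefix, Function.update_self,
    Function.update_of_ne (by omega), hpn]
  push_cast
  ring

theorem chainCosts_nonempty : (chainCosts c α x y).Nonempty :=
  ⟨_, add_mem_chainCosts zero_mem_chainCosts y⟩

theorem exists_of_mem_chainCosts_of_ne (hr : r ∈ chainCosts c α x y) (hyx : y ≠ x) :
    ∃ z, ∃ r' ∈ chainCosts c α x z, r = r' + (c z y + α) := by
  obtain ⟨n, p, hp0, hpn, rfl⟩ := hr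
  obtain _ | k := n
  · exact absurd (hpn.symm.trans hp0) hyx
  refine ⟨p k, _, ⟨k, p, hp0, rfl, rfl⟩, ?_⟩
  rw [Finset.sum_range_succ, hpn]
  push_cast
  ring

theorem Dominated.mono {β : ℝ} (hu : Dominated c α u) (hαβ : α ≤ β) : Dominated c β u :=
  fun x y => (hu x y).trans (by linarith)

theorem Dominated.sub_le_sum (hu : Dominated c α u) (p : ℕ → X) (n : ℕ) :
    u (p n) - u (p 0) ≤ ∑ i ∈ Finset.range n, c (p i) (p (i + 1)) + n * α := by
  induction n with
  | zero => simp
  | succ n ih =>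
    rw [Finset.sum_range_succ]
    push_cast
    linarith [hu (p n) (p (n + 1))]

theorem Dominated.sub_le_of_mem_chainCosts (hu : Dominated c α u) (hr : r ∈ chainCosts c α x y) :
    u y - u x ≤ r := by
  obtain ⟨n, p, rfl, rfl, rfl⟩ := hr
  exact hu.sub_le_sum p n

theorem Dominated.sub_le_chainPotential (hu : Dominated c α u) :
    u y - u x ≤ chainPotential c α x y :=
  le_csInf chainCosts_nonempty fun _ => hu.sub_le_of_mem_chainCosts

end ChainPotential

section Critical

variable {X : Type*} {c : X → X → ℝ} {r : ℝ} {x y : X}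

theorem UniformlySuperlinear.exists_dominated [MetricSpace X] (hsl : UniformlySuperlinear c) :
    ∃ α u, Dominated c α u := by
  obtain ⟨C, hC⟩ := hsl 0 le_rfl
  refine ⟨C, 0, fun x y => ?_⟩
  simp only [Pi.zero_apply, sub_self]
  linarith [hC x y]

theorem exists_dominated_of_critValue_lt (hcrit : ∃ α u, Dominated c α u) {a : ℝ}
    (ha : critValue c < a) : ∃ u, Dominated c a u := by
  obtain ⟨β, ⟨u, hu⟩, hβa⟩ := exists_lt_of_csInf_lt hcrit ha
  exact ⟨u, hu.mono hβa.le⟩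

theorem nonneg_of_mem_chainCosts_critValue (hcrit : ∃ α u, Dominated c α u)
    (hr : r ∈ chainCosts c (critValue c) x x) : 0 ≤ r := by
  obtain ⟨n, p, hp0, hpn, rfl⟩ := hr
  set S := ∑ i ∈ Finset.range n, c (p i) (p (i + 1))
  have hsupercrit : ∀ a > critValue c, 0 ≤ S + n * a := fun a ha => by
    obtain ⟨u, hu⟩ := exists_dominated_of_critValue_lt hcrit ha
    simpa using hu.sub_le_of_mem_chainCosts (⟨n, p, hp0, hpn, rfl⟩ : _ ∈ chainCosts c a x x)
  exact ge_of_tendsto ((by fun_prop : Continuous fun a : ℝ => S + n * a).continuousWithinAt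
    (s := Ioi (critValue c))) (eventually_nhdsWithin_of_forall hsupercrit)

theorem neg_le_of_mem_chainCosts_critValue (hcrit : ∃ α u, Dominated c α u)
    (hr : r ∈ chainCosts c (critValue c) x y) : -(c y x + critValue c) ≤ r := by
  linarith [nonneg_of_mem_chainCosts_critValue hcrit (add_mem_chainCosts hr x)]

theorem chainPotential_critValue_le (hcrit : ∃ α u, Dominated c α u)
    (hr : r ∈ chainCosts c (critValue c) x y) : chainPotential c (critValue c) x y ≤ r :=
  csInf_le ⟨_, fun _ => neg_le_of_mem_chainCosts_critValue hcrit⟩ hr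

theorem chainPotential_critValue_self (hcrit : ∃ α u, Dominated c α u) :
    chainPotential c (critValue c) x x = 0 :=
  le_antisymm (chainPotential_critValue_le hcrit zero_mem_chainCosts)
    (le_csInf chainCosts_nonempty fun _ => nonneg_of_mem_chainCosts_critValue hcrit)

theorem dominated_chainPotential_critValue (hcrit : ∃ α u, Dominated c α u) (x : X) :
    Dominated c (critValue c) (chainPotential c (critValue c) x) := by
  intro y z
  have : chainPotential c (critValue c) x z - (c y z + critValue c) ≤
      chainPotential c (critValue c) x y :=
    le_csInf chainCosts_nonempty fun _ hr' => by
      linarith [chainPotential_critValue_le hcrit (add_mem_chainCosts hr' z)]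
  linarith

theorem mane_eq_chainPotential (hcrit : ∃ α u, Dominated c α u) (x : X) :
    mane c x = chainPotential c (critValue c) x := by
  funext y
  have hbound : ∀ r ∈ {r : ℝ | ∃ u, Dominated c (critValue c) u ∧ r = u y - u x},
      r ≤ chainPotential c (critValue c) x y := by
    rintro _ ⟨u, hu, rfl⟩
    exact hu.sub_le_chainPotential
  have hmem : chainPotential c (critValue c) x y ∈
      {r : ℝ | ∃ u, Dominated c (critValue c) u ∧ r = u y - u x} :=
    ⟨_, dominated_chainPotential_critValue hcrit x, by rw [chainPotential_critValue_self hcrit,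
      sub_zero]⟩
  exact le_antisymm (csSup_le ⟨_, hmem⟩ hbound) (le_csSup ⟨_, hbound⟩ hmem)

theorem chainPotential_critValue_eq_Tm_add (hcrit : ∃ α u, Dominated c α u) (hyx : y ≠ x) :
    chainPotential c (critValue c) x y =
      Tm c (chainPotential c (critValue c) x) y + critValue c := by
  have hdom := dominated_chainPotential_critValue hcrit x
  refine le_antisymm (by linarith [hdom.sub_le_Tm y]) (le_csInf chainCosts_nonempty fun r hr => ?_)
  obtain ⟨z, r', hr', rfl⟩ := exists_of_mem_chainCosts_of_ne hr hyx
  linarith [hdom.Tm_le z y, chainPotential_critValue_le hcrit hr']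

end Critical

theorem LowerSemicontinuous.of_eqOn_compl_singleton {X β : Type*} [TopologicalSpace X]
    [T1Space X] [Preorder β] {f g : X → β} {x : X} (hg : LowerSemicontinuous g)
    (hfg : EqOn f g {x}ᶜ) (hx : f x ≤ g x) : LowerSemicontinuous f := by
  intro y t ht
  by_cases hyx : y = x
  · subst hyx
    filter_upwards [hg y t (ht.trans_le hx)] with z hz
    by_cases hzy : z = y
    · rwa [hzy]
    · rwa [hfg hzy]
  · filter_upwards [hg y t (by rwa [hfg hyx] at ht), isOpen_compl_singleton.mem_nhds hyx]
      with z hz hzx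
    rwa [hfg hzx]

theorem mane_potential_is_subsolution_general {X : Type*} [MetricSpace X] [ProperSpace X]
    {B K : ℝ} (hB : 1 ≤ B) (hK : 0 < K) (hlen : IsBLengthSpaceAtScale X B K)
    {c : X → X → ℝ} (hcont : Continuous fun q : X × X => c q.1 q.2)
    (hsl : UniformlySuperlinear c) (hub : UniformlyBounded c) (x : X) :
    Dominated c (critValue c) (mane c x) ∧
    (∀ y : X, y ≠ x → mane c x y = Tm c (mane c x) y + critValue c) ∧
    LowerSemicontinuous (mane c x) ∧
    ContinuousOn (mane c x) {x}ᶜ := by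
  have hcrit := hsl.exists_dominated
  rw [mane_eq_chainPotential hcrit x]
  set φ := chainPotential c (critValue c) x
  have hdom : Dominated c (critValue c) φ := dominated_chainPotential_critValue hcrit x
  have hTm : EqOn φ (fun y => Tm c φ y + critValue c) {x}ᶜ :=
    fun _ hy => chainPotential_critValue_eq_Tm_add hcrit hy
  obtain ⟨L, E, hL, hlip⟩ := hdom.exists_sub_le_mul_dist_add (by linarith) hK hlen hub
  obtain ⟨C, hC⟩ := hsl (L + 1) (by linarith)
  have hgrowth : ∀ w, -(L * dist w x) - E ≤ φ w := fun w => by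
    linarith [hlip w x, chainPotential_critValue_self hcrit (x := x)]
  have hcontTm : Continuous fun y => Tm c φ y + critValue c :=
    (continuous_Tm hcont hL hgrowth hC).add continuous_const
  exact ⟨hdom, fun _ hy => hTm hy, hcontTm.lowerSemicontinuous.of_eqOn_compl_singleton hTm
    (by linarith [hdom.sub_le_Tm x]), hcontTm.continuousOn.congr hTm⟩

theorem mane_potential_is_subsolution {X : Type*} [MetricSpace X] [Nonempty X] [ProperSpace X]
    {B K : ℝ} (hB : 1 ≤ B) (hK : 0 < K) (hlen : IsBLengthSpaceAtScale X B K)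
    {c : X → X → ℝ} (hcont : Continuous fun q : X × X => c q.1 q.2)
    (hsl : UniformlySuperlinear c) (hub : UniformlyBounded c) (x : X) :
    Dominated c (critValue c) (mane c x) ∧
    (∀ y : X, y ≠ x → mane c x y = Tm c (mane c x) y + critValue c) ∧
    LowerSemicontinuous (mane c x) ∧
    ContinuousOn (mane c x) {x}ᶜ :=
  mane_potential_is_subsolution_general hB hK hlen hcont hsl hub x
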